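/- arXiv:2402.08748 — 7 statements merged into one kernel-verified Lean document; each statement's English description precedes it below -/
import Mathlib

section
/- Let w ∈ ℤⁿ be nonzero, b ∈ ℤ, and X* ∈ {0,1}ⁿ with wᵀX* = b. Set c = 1/‖w‖₂² and define a₀ = X* (positive anchor), a₁ = X* - c·w, a₂ = X* + c·w (negative anchors). Then for every X ∈ {0,1}ⁿ: if wᵀX = b then d(X,a₀) < d(X,a₁) and d(X,a₀) < d(X,a₂); and if wᵀX ≠ b then min(d(X,a₁), d(X,a₂)) < d(X,a₀). Hence these three collinear anchors form an NN representation of the exact threshold function 𝟙{wᵀX = b}. -/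
/-- Three collinear anchors `a₀ = X*`, `a₁ = X* - c·w`, `a₂ = X* + c·w` with
`c = 1/‖w‖₂²` form an NN representation of the exact threshold function
`𝟙{wᵀX = b}`. -/
theorem stmt_2 (n : ℕ) (w : Fin n → ℤ) (hw : w ≠ 0) (b : ℤ)
    (Xs : EuclideanSpace ℝ (Fin n)) (hXsbin : ∀ i, Xs i = 0 ∨ Xs i = 1)
    (hXs : ∑ i, (w i : ℝ) * Xs i = (b : ℝ))
    (c : ℝ) (hc : c = 1 / ∑ i, (w i : ℝ) ^ 2)
    (a₀ a₁ a₂ : EuclideanSpace ℝ (Fin n))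
    (ha₀ : a₀ = Xs)
    (ha₁ : ∀ i, a₁ i = Xs i - c * (w i : ℝ))
    (ha₂ : ∀ i, a₂ i = Xs i + c * (w i : ℝ)) :
    ∀ X : EuclideanSpace ℝ (Fin n), (∀ i, X i = 0 ∨ X i = 1) →
      ((∑ i, (w i : ℝ) * X i = (b : ℝ) →
          dist X a₀ < dist X a₁ ∧ dist X a₀ < dist X a₂) ∧
       (∑ i, (w i : ℝ) * X i ≠ (b : ℝ) →
          min (dist X a₁) (dist X a₂) < dist X a₀)) := by
  intro X hXbin
  have hW : (0:ℝ) < ∑ i, (w i:ℝ)^2 := by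
    obtain ⟨j, hj⟩ : ∃ j, w j ≠ 0 := by
      by_contra h; push_neg at h; exact hw (funext h)
    refine Finset.sum_pos' (fun i _ => sq_nonneg _) ⟨j, Finset.mem_univ j, ?_⟩
    have : (w j : ℝ) ≠ 0 := Int.cast_ne_zero.mpr hj
    positivity
  set W := ∑ i, (w i:ℝ)^2 with hWdef
  have hcpos : 0 < c := by rw [hc]; positivity
  have hcW : c * W = 1 := by rw [hc]; field_simp
  set S := (∑ i, (w i:ℝ) * X i) - (b:ℝ) with hSdef
  have hdist : ∀ a : EuclideanSpace ℝ (Fin n),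
      dist X a = Real.sqrt (∑ i, (X i - a i)^2) := by
    intro a
    rw [EuclideanSpace.dist_eq]
    congr 1
    refine Finset.sum_congr rfl fun i _ => ?_
    rw [Real.dist_eq, sq_abs]
  set D0 := ∑ i, (X i - Xs i)^2 with hD0
  have hD0nonneg : 0 ≤ D0 := Finset.sum_nonneg fun i _ => sq_nonneg _
  have hsumw : ∑ i, (w i:ℝ) * (X i - Xs i) = S := by
    simp only [mul_sub, Finset.sum_sub_distrib, hXs, hSdef]
  have hD1 : ∑ i, (X i - a₁ i)^2 = D0 + 2*c*S + c := by
    have h1 : ∀ i ∈ Finset.univ, (X i - a₁ i)^2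
        = (X i - Xs i)^2 + (2*c) * ((w i:ℝ) * (X i - Xs i)) + c^2 * (w i:ℝ)^2 := by
      intro i _; rw [ha₁ i]; ring
    rw [Finset.sum_congr rfl h1, Finset.sum_add_distrib, Finset.sum_add_distrib,
      ← Finset.mul_sum, ← Finset.mul_sum, hsumw, ← hD0, ← hWdef]
    have : c^2 * W = c := by rw [sq]; rw [mul_assoc, hcW, mul_one]
    rw [this]
  have hD2 : ∑ i, (X i - a₂ i)^2 = D0 - 2*c*S + c := by
    have h1 : ∀ i ∈ Finset.univ, (X i - a₂ i)^2
        = (X i - Xs i)^2 + (-(2*c)) * ((w i:ℝ) * (X i - Xs i)) + c^2 * (w i:ℝ)^2 := by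
      intro i _; rw [ha₂ i]; ring
    rw [Finset.sum_congr rfl h1, Finset.sum_add_distrib, Finset.sum_add_distrib,
      ← Finset.mul_sum, ← Finset.mul_sum, hsumw, ← hD0, ← hWdef]
    have : c^2 * W = c := by rw [sq]; rw [mul_assoc, hcW, mul_one]
    rw [this]; ring
  have hd0 : dist X a₀ = Real.sqrt D0 := by rw [hdist, ha₀]
  have hd1 : dist X a₁ = Real.sqrt (D0 + 2*c*S + c) := by rw [hdist, hD1]
  have hd2 : dist X a₂ = Real.sqrt (D0 - 2*c*S + c) := by rw [hdist, hD2]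
  constructor
  · intro hX
    have hS0 : S = 0 := by rw [hSdef, hX]; ring
    rw [hd0, hd1, hd2, hS0]
    constructor <;> { apply Real.sqrt_lt_sqrt hD0nonneg; nlinarith }
  · intro hX
    have hSne : S ≠ 0 := fun h => hX (by have := hSdef ▸ h; linarith)
    obtain ⟨m, hm⟩ : ∃ m : ℤ, ∑ i, (w i:ℝ) * X i = (m:ℝ) := by
      refine ⟨∑ i, if X i = 1 then w i else 0, ?_⟩
      push_cast
      refine Finset.sum_congr rfl fun i _ => ?_
      rcases hXbin i with h | h <;> simp [h]
    have hSm : S = ((m - b : ℤ) : ℝ) := by rw [hSdef, hm]; push_cast; ring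
    have hmb : m - b ≠ 0 := by
      intro h; apply hSne; rw [hSm, h]; simp
    have habs : (1:ℝ) ≤ |S| := by
      rw [hSm, ← Int.cast_abs]
      exact_mod_cast Int.one_le_abs hmb
    rw [hd0, hd1, hd2]
    rcases abs_cases S with ⟨he, _⟩ | ⟨he, _⟩
    · -- S ≥ 1 : use a₂
      rw [he] at habs
      refine lt_of_le_of_lt (min_le_right _ _) ?_
      apply Real.sqrt_lt_sqrt (by rw [← hD2]; exact Finset.sum_nonneg fun i _ => sq_nonneg _)
      nlinarith [mul_le_mul_of_nonneg_left habs hcpos.le]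
    · -- S ≤ -1 : use a₁
      rw [he] at habs
      refine lt_of_le_of_lt (min_le_left _ _) ?_
      apply Real.sqrt_lt_sqrt (by rw [← hD1]; exact Finset.sum_nonneg fun i _ => sq_nonneg _)
      nlinarith [mul_le_mul_of_nonneg_left habs hcpos.le]
end

section
/- With the setup of the 3-anchor construction (a₀ = X*, a₁ = X* - c·w, a₂ = X* + c·w, wᵀX* = b), for every X ∈ {0,1}ⁿ: min(d(X,a₁)², d(X,a₂)²) = d(X,a₀)² - 2c|wᵀX - b| + c²‖w‖₂². -/
lemma dist_sq_eq (n : ℕ) (x y : EuclideanSpace ℝ (Fin n)) :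
    dist x y ^ 2 = ∑ i, (x i - y i) ^ 2 := by
  rw [EuclideanSpace.dist_eq, Real.sq_sqrt (by positivity)]
  simp [Real.dist_eq, sq_abs]

/-- `min(d(X,a₁)², d(X,a₂)²) = d(X,a₀)² - 2c|wᵀX - b| + c²‖w‖₂²` in the
3-anchor construction. -/
theorem stmt_3 (n : ℕ) (w : Fin n → ℤ) (b : ℤ)
    (Xs : EuclideanSpace ℝ (Fin n)) (hXs : ∑ i, (w i : ℝ) * Xs i = (b : ℝ))
    (c : ℝ) (hc : 0 < c)
    (a₀ a₁ a₂ : EuclideanSpace ℝ (Fin n))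
    (ha₀ : a₀ = Xs)
    (ha₁ : ∀ i, a₁ i = Xs i - c * (w i : ℝ))
    (ha₂ : ∀ i, a₂ i = Xs i + c * (w i : ℝ)) :
    ∀ X : EuclideanSpace ℝ (Fin n), (∀ i, X i = 0 ∨ X i = 1) →
      min (dist X a₁ ^ 2) (dist X a₂ ^ 2) =
        dist X a₀ ^ 2 - 2 * c * |(∑ i, (w i : ℝ) * X i) - (b : ℝ)|
          + c ^ 2 * ∑ i, (w i : ℝ) ^ 2 := by
  intro X _
  set S : ℝ := (∑ i, (w i : ℝ) * X i) - (b : ℝ) with hS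
  have hD : dist X a₀ ^ 2 = ∑ i, (X i - Xs i) ^ 2 := by
    rw [dist_sq_eq, ha₀]
  have key : ∀ i, (w i : ℝ) * X i - (w i : ℝ) * Xs i = (w i : ℝ) * (X i - Xs i) := by
    intro i; ring
  have hSsum : S = ∑ i, (w i : ℝ) * (X i - Xs i) := by
    rw [hS, ← hXs, ← Finset.sum_sub_distrib]
    exact Finset.sum_congr rfl fun i _ => key i
  have h1 : dist X a₁ ^ 2 = dist X a₀ ^ 2 + 2 * c * S + c ^ 2 * ∑ i, (w i : ℝ) ^ 2 := by
    rw [dist_sq_eq, hD, hSsum, Finset.mul_sum, Finset.mul_sum, ← Finset.sum_add_distrib,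
      ← Finset.sum_add_distrib]
    refine Finset.sum_congr rfl fun i _ => ?_
    rw [ha₁ i]; ring
  have h2 : dist X a₂ ^ 2 = dist X a₀ ^ 2 - 2 * c * S + c ^ 2 * ∑ i, (w i : ℝ) ^ 2 := by
    rw [dist_sq_eq, hD, hSsum, Finset.mul_sum, Finset.mul_sum, ← Finset.sum_sub_distrib,
      ← Finset.sum_add_distrib]
    refine Finset.sum_congr rfl fun i _ => ?_
    rw [ha₂ i]; ring
  rw [h1, h2]
  rcases abs_cases S with ⟨h, hs⟩ | ⟨h, hs⟩ <;> rw [h]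
  · rw [min_eq_right (by nlinarith)]
  · rw [min_eq_left (by nlinarith)]; ring
end

section
/- Define EQ : {0,1}ⁿ × {0,1}ⁿ → {0,1} by EQ(X,Y) = 1 iff X = Y. The 2n+1 anchors a₀ = (1/2)·𝟙 (positive), and for each i ∈ {1,…,n}, a_{2i-1} = a₀ + (1/2)(eᵢ, -eᵢ) and a_{2i} = a₀ - (1/2)(eᵢ, -eᵢ) (negative), form an NN representation of EQ in ℝ^{2n}: if X = Y then a₀ is strictly closest to (X,Y), and if X ≠ Y then some negative anchor is strictly closer than a₀. -/
/-!
Write `w = (eᵢ, -eᵢ)`, so that the anchors are `a₀ ± ½ w`. Expanding the square,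
`‖Z - (a₀ ± ½ w)‖² = ‖Z - a₀‖² ∓ ⟪Z - a₀, w⟫ + ½` with `⟪Z - a₀, w⟫ = Xᵢ - Yᵢ`.
If `X = Y` every anchor is thus farther than `a₀` by a margin of `½`; if `Xᵢ ≠ Yᵢ` for
binary vectors then `Xᵢ - Yᵢ = ±1`, and the anchor with the matching sign wins by `½`.
-/

open EuclideanSpace

section SingleSubSingle

variable {ι : Type*} [Fintype ι] [DecidableEq ι]

theorem EuclideanSpace.inner_single_sub_single (u : EuclideanSpace ℝ ι) (p q : ι) :
    inner ℝ u (single p 1 - single q 1) = u p - u q := by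
  simp [inner_sub_right, inner_single_right]

theorem EuclideanSpace.norm_single_sub_single_sq {p q : ι} (hpq : p ≠ q) :
    ‖(single p 1 - single q 1 : EuclideanSpace ℝ ι)‖ ^ 2 = 2 := by
  rw [← real_inner_self_eq_norm_sq, inner_single_sub_single]
  norm_num [hpq, hpq.symm]

theorem EuclideanSpace.dist_add_smul_single_sub_single_sq {p q : ι} (hpq : p ≠ q)
    (z a : EuclideanSpace ℝ ι) (c : ℝ) :
    dist z (a + c • (single p 1 - single q 1)) ^ 2 =
      dist z a ^ 2 - 2 * c * ((z p - a p) - (z q - a q)) + 2 * c ^ 2 := by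
  rw [dist_eq_norm, dist_eq_norm, ← sub_sub, norm_sub_sq_real, inner_smul_right,
    inner_single_sub_single, norm_smul, mul_pow, norm_single_sub_single_sq hpq,
    Real.norm_eq_abs, sq_abs]
  simp only [PiLp.sub_apply]
  ring

end SingleSubSingle

/-- The `2n+1` anchors `a₀ = ½𝟙`, `a₀ ± ½(eᵢ,-eᵢ)` form an NN representation
of the `2n`-input EQUALITY function. -/
theorem stmt_5 (n : ℕ)
    (a₀ : EuclideanSpace ℝ (Fin n ⊕ Fin n)) (ha₀ : ∀ j, a₀ j = 1 / 2)
    (aP aM : Fin n → EuclideanSpace ℝ (Fin n ⊕ Fin n))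
    (haP : ∀ i j, aP i j =
      1 / 2 + (1 / 2) * Sum.elim (fun k => if k = i then (1 : ℝ) else 0)
        (fun k => if k = i then (-1 : ℝ) else 0) j)
    (haM : ∀ i j, aM i j =
      1 / 2 - (1 / 2) * Sum.elim (fun k => if k = i then (1 : ℝ) else 0)
        (fun k => if k = i then (-1 : ℝ) else 0) j) :
    ∀ X Y : Fin n → ℝ, (∀ i, X i = 0 ∨ X i = 1) → (∀ i, Y i = 0 ∨ Y i = 1) →
      ∀ Z : EuclideanSpace ℝ (Fin n ⊕ Fin n), Z = Sum.elim X Y →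
        ((X = Y → ∀ i, dist Z a₀ < dist Z (aP i) ∧ dist Z a₀ < dist Z (aM i)) ∧
         (X ≠ Y → ∃ i, dist Z (aP i) < dist Z a₀ ∨ dist Z (aM i) < dist Z a₀)) := by
  intro X Y hX hY Z hZ
  have haP' (i : Fin n) : aP i = a₀ + (1 / 2 : ℝ) • (single (.inl i) 1 - single (.inr i) 1) := by
    ext (j | j) <;> simp [haP, ha₀, eq_comm, neg_ite]
  have haM' (i : Fin n) : aM i = a₀ + (1 / 2 : ℝ) • (single (.inr i) 1 - single (.inl i) 1) := by
    ext (j | j) <;> simp [haM, ha₀, eq_comm, neg_ite, sub_eq_add_neg]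
  have hdistP (i : Fin n) : dist Z (aP i) ^ 2 = dist Z a₀ ^ 2 - (X i - Y i) + 1 / 2 := by
    rw [haP', dist_add_smul_single_sub_single_sq Sum.inl_ne_inr, hZ, ha₀, ha₀,
      Sum.elim_inl, Sum.elim_inr]
    ring
  have hdistM (i : Fin n) : dist Z (aM i) ^ 2 = dist Z a₀ ^ 2 + (X i - Y i) + 1 / 2 := by
    rw [haM', dist_add_smul_single_sub_single_sq Sum.inr_ne_inl, hZ, ha₀, ha₀,
      Sum.elim_inl, Sum.elim_inr]
    ring
  have hlt {a b : EuclideanSpace ℝ (Fin n ⊕ Fin n)} (h : dist Z a ^ 2 < dist Z b ^ 2) :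
      dist Z a < dist Z b := (sq_lt_sq₀ dist_nonneg dist_nonneg).1 h
  refine ⟨fun hXY i => ⟨hlt ?_, hlt ?_⟩, fun hXY => ?_⟩
  · rw [hdistP, hXY, sub_self]; linarith
  · rw [hdistM, hXY, sub_self]; linarith
  obtain ⟨i, hi⟩ := Function.ne_iff.mp hXY
  have hdiff : X i - Y i = 1 ∨ X i - Y i = -1 := by
    rcases hX i with hx | hx <;> rcases hY i with hy | hy <;> simp_all
  refine ⟨i, hdiff.imp (fun h => hlt ?_) (fun h => hlt ?_)⟩
  · rw [hdistP, h]; linarith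
  · rw [hdistM, h]; linarith
end

section
/- Let A ∈ ℤ^{m×n} be a matrix such that Az = 0 has no nonzero solution z ∈ {-1,0,1}ⁿ, and assume no row of A is all-zero. Let Aᵢ denote the i-th row and cᵢ = 1/(2‖Aᵢ‖₂²). Define anchors in ℝ^{2n}: a₀ = (1/2)𝟙 (positive) and, for i ∈ {1,…,m}, a_{2i-1} = a₀ + cᵢ(Aᵢ, -Aᵢ), a_{2i} = a₀ - cᵢ(Aᵢ, -Aᵢ) (negative). Then for all X, Y ∈ {0,1}ⁿ: if X = Y, then d((X,Y), a₀) < d((X,Y), a_j) for all j ≥ 1; if X ≠ Y, then there exists j ≥ 1 with d((X,Y), a_j) < d((X,Y), a₀). Hence this is a (2m+1)-anchor NN representation of the 2n-input EQUALITY function. -/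
private lemma stmt_6_aux (n : ℕ) (B X Y : Fin n → ℝ) (c ε : ℝ)
    (h1 : c * (2 * ∑ k, B k ^ 2) = 1) (hε : ε ^ 2 = 1) :
    ∑ k, ((X k - (1/2 + c * (ε * B k)))^2 + (Y k - (1/2 - c * (ε * B k)))^2)
      = (∑ k, (X k - 1/2)^2) + (∑ k, (Y k - 1/2)^2)
        + c * (1 - 2 * ε * ∑ k, B k * (X k - Y k)) := by
  calc ∑ k, ((X k - (1/2 + c * (ε * B k)))^2 + (Y k - (1/2 - c * (ε * B k)))^2)
      = ∑ k, (((X k - 1/2)^2 + (Y k - 1/2)^2)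
          + ((2*c^2) * (B k)^2 - (2*c*ε) * (B k * (X k - Y k)))) := by
        refine Finset.sum_congr rfl fun k _ => ?_
        linear_combination (2*c^2*(B k)^2) * hε
    _ = (∑ k, ((X k - 1/2)^2 + (Y k - 1/2)^2))
          + ((2*c^2) * (∑ k, (B k)^2) - (2*c*ε) * (∑ k, B k * (X k - Y k))) := by
        rw [Finset.sum_add_distrib, Finset.sum_sub_distrib, ← Finset.mul_sum, ← Finset.mul_sum]
    _ = _ := by
        rw [Finset.sum_add_distrib]
        linear_combination c * h1

/-- Any EQ matrix `A ∈ ℤ^{m×n}` with no all-zero rows gives a `(2m+1)`-anchor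
NN representation of the `2n`-input EQUALITY function. -/
theorem stmt_6 (m n : ℕ) (A : Fin m → Fin n → ℤ)
    (hEQ : ∀ z : Fin n → ℤ, (∀ j, z j = -1 ∨ z j = 0 ∨ z j = 1) →
      (∀ i, ∑ j, A i j * z j = 0) → z = 0)
    (hrow : ∀ i, A i ≠ 0)
    (c : Fin m → ℝ) (hc : ∀ i, c i = 1 / (2 * ∑ j, (A i j : ℝ) ^ 2))
    (a₀ : EuclideanSpace ℝ (Fin n ⊕ Fin n)) (ha₀ : ∀ j, a₀ j = 1 / 2)
    (aP aM : Fin m → EuclideanSpace ℝ (Fin n ⊕ Fin n))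
    (haP : ∀ i j, aP i j =
      1 / 2 + c i * Sum.elim (fun k => (A i k : ℝ)) (fun k => -(A i k : ℝ)) j)
    (haM : ∀ i j, aM i j =
      1 / 2 - c i * Sum.elim (fun k => (A i k : ℝ)) (fun k => -(A i k : ℝ)) j) :
    ∀ X Y : Fin n → ℝ, (∀ i, X i = 0 ∨ X i = 1) → (∀ i, Y i = 0 ∨ Y i = 1) →
      ∀ Z : EuclideanSpace ℝ (Fin n ⊕ Fin n), Z = Sum.elim X Y →
        ((X = Y → ∀ i, dist Z a₀ < dist Z (aP i) ∧ dist Z a₀ < dist Z (aM i)) ∧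
         (X ≠ Y → ∃ i, dist Z (aP i) < dist Z a₀ ∨ dist Z (aM i) < dist Z a₀)) := by
  classical
  intro X Y hX hY Z hZ
  have hQpos : ∀ i, (0:ℝ) < ∑ j, (A i j : ℝ) ^ 2 := by
    intro i
    obtain ⟨j, hj⟩ := Function.ne_iff.mp (hrow i)
    refine Finset.sum_pos' (fun k _ => sq_nonneg _) ⟨j, Finset.mem_univ j, ?_⟩
    have : (A i j : ℝ) ≠ 0 := Int.cast_ne_zero.mpr hj
    positivity
  have hci : ∀ i, 0 < c i := by
    intro i; rw [hc i]
    have := hQpos i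
    positivity
  have hcQ : ∀ i, c i * (2 * ∑ j, (A i j : ℝ) ^ 2) = 1 := by
    intro i
    have h0 : (2 * ∑ j, (A i j : ℝ) ^ 2) ≠ 0 := by
      have := hQpos i; positivity
    rw [hc i, one_div, inv_mul_cancel₀ h0]
  have hD0nonneg : (0:ℝ) ≤ (∑ k, (X k - 1/2)^2) + (∑ k, (Y k - 1/2)^2) := by
    apply add_nonneg <;> exact Finset.sum_nonneg fun _ _ => sq_nonneg _
  have hdist0 : dist Z a₀ = Real.sqrt ((∑ k, (X k - 1/2)^2) + (∑ k, (Y k - 1/2)^2)) := by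
    rw [EuclideanSpace.dist_eq]
    congr 1
    rw [Fintype.sum_sum_type]
    congr 1 <;> refine Finset.sum_congr rfl fun k _ => ?_ <;>
      rw [hZ, ha₀, Real.dist_eq, sq_abs] <;> simp
  -- the positive anchors
  have hdistP : ∀ i, 0 ≤ (∑ k, (X k - 1/2)^2) + (∑ k, (Y k - 1/2)^2)
        + c i * (1 - 2 * ∑ k, (A i k : ℝ) * (X k - Y k)) ∧
      dist Z (aP i) = Real.sqrt ((∑ k, (X k - 1/2)^2) + (∑ k, (Y k - 1/2)^2)
        + c i * (1 - 2 * ∑ k, (A i k : ℝ) * (X k - Y k))) := by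
    intro i
    have hsum : (∑ j, dist (Z j) (aP i j) ^ 2)
        = ∑ k, ((X k - (1/2 + c i * ((1:ℝ) * (A i k : ℝ))))^2
            + (Y k - (1/2 - c i * ((1:ℝ) * (A i k : ℝ))))^2) := by
      rw [Fintype.sum_sum_type, ← Finset.sum_add_distrib]
      refine Finset.sum_congr rfl fun k _ => ?_
      rw [hZ]
      simp only [haP, Sum.elim_inl, Sum.elim_inr, Real.dist_eq, sq_abs]
      ring
    have hE : (∑ k, ((X k - (1/2 + c i * ((1:ℝ) * (A i k : ℝ))))^2
            + (Y k - (1/2 - c i * ((1:ℝ) * (A i k : ℝ))))^2))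
        = (∑ k, (X k - 1/2)^2) + (∑ k, (Y k - 1/2)^2)
          + c i * (1 - 2 * ∑ k, (A i k : ℝ) * (X k - Y k)) := by
      have h := stmt_6_aux n (fun k => (A i k : ℝ)) X Y (c i) 1 (hcQ i) (one_pow 2)
      rw [h]; ring
    constructor
    · rw [← hE, ← hsum]
      exact Finset.sum_nonneg fun _ _ => sq_nonneg _
    · rw [EuclideanSpace.dist_eq, hsum, hE]
  -- the negative anchors
  have hdistM : ∀ i, 0 ≤ (∑ k, (X k - 1/2)^2) + (∑ k, (Y k - 1/2)^2)
        + c i * (1 + 2 * ∑ k, (A i k : ℝ) * (X k - Y k)) ∧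
      dist Z (aM i) = Real.sqrt ((∑ k, (X k - 1/2)^2) + (∑ k, (Y k - 1/2)^2)
        + c i * (1 + 2 * ∑ k, (A i k : ℝ) * (X k - Y k))) := by
    intro i
    have hsum : (∑ j, dist (Z j) (aM i j) ^ 2)
        = ∑ k, ((X k - (1/2 + c i * ((-1:ℝ) * (A i k : ℝ))))^2
            + (Y k - (1/2 - c i * ((-1:ℝ) * (A i k : ℝ))))^2) := by
      rw [Fintype.sum_sum_type, ← Finset.sum_add_distrib]
      refine Finset.sum_congr rfl fun k _ => ?_
      rw [hZ]
      simp only [haM, Sum.elim_inl, Sum.elim_inr, Real.dist_eq, sq_abs]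
      ring
    have hE : (∑ k, ((X k - (1/2 + c i * ((-1:ℝ) * (A i k : ℝ))))^2
            + (Y k - (1/2 - c i * ((-1:ℝ) * (A i k : ℝ))))^2))
        = (∑ k, (X k - 1/2)^2) + (∑ k, (Y k - 1/2)^2)
          + c i * (1 + 2 * ∑ k, (A i k : ℝ) * (X k - Y k)) := by
      have h := stmt_6_aux n (fun k => (A i k : ℝ)) X Y (c i) (-1) (hcQ i) (by norm_num)
      rw [h]; ring
    constructor
    · rw [← hE, ← hsum]
      exact Finset.sum_nonneg fun _ _ => sq_nonneg _
    · rw [EuclideanSpace.dist_eq, hsum, hE]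
  constructor
  · -- X = Y case
    intro hXY i
    have hs0 : (∑ k, (A i k : ℝ) * (X k - Y k)) = 0 := by simp [hXY]
    constructor
    · rw [hdist0, (hdistP i).2, hs0]
      apply Real.sqrt_lt_sqrt hD0nonneg
      nlinarith [hci i]
    · rw [hdist0, (hdistM i).2, hs0]
      apply Real.sqrt_lt_sqrt hD0nonneg
      nlinarith [hci i]
  · -- X ≠ Y case
    intro hXY
    set z : Fin n → ℤ :=
      fun k => (if X k = 1 then (1:ℤ) else 0) - (if Y k = 1 then 1 else 0) with hzdef
    have hzcast : ∀ k, (z k : ℝ) = X k - Y k := by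
      intro k
      rcases hX k with hx | hx <;> rcases hY k with hy | hy <;>
        simp [hzdef, hx, hy]
    have hzrange : ∀ k, z k = -1 ∨ z k = 0 ∨ z k = 1 := by
      intro k
      rcases hX k with hx | hx <;> rcases hY k with hy | hy <;>
        simp [hzdef, hx, hy]
    have hzne : z ≠ 0 := by
      intro h0
      apply hXY
      funext k
      have : (z k : ℝ) = 0 := by rw [h0]; simp
      rw [hzcast k] at this
      linarith
    have hex : ¬ (∀ i, ∑ j, A i j * z j = 0) := fun h => hzne (hEQ z hzrange h)
    push_neg at hex
    obtain ⟨i, hi⟩ := hex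
    have hsi : (∑ k, (A i k : ℝ) * (X k - Y k)) = ((∑ j, A i j * z j : ℤ) : ℝ) := by
      push_cast
      exact Finset.sum_congr rfl fun k _ => by rw [← hzcast k]
    refine ⟨i, ?_⟩
    rcases lt_or_gt_of_ne hi with h | h
    · -- sum ≤ -1 : negative anchor wins
      right
      have ht : ((∑ j, A i j * z j : ℤ) : ℝ) ≤ -1 := by exact_mod_cast (by omega : (∑ j, A i j * z j) ≤ -1)
      rw [hdist0, (hdistM i).2]
      apply Real.sqrt_lt_sqrt (hdistM i).1
      nlinarith [hci i, hsi, ht]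
    · -- sum ≥ 1 : positive anchor wins
      left
      have ht : (1:ℝ) ≤ ((∑ j, A i j * z j : ℤ) : ℝ) := by exact_mod_cast (by omega : 1 ≤ (∑ j, A i j * z j))
      rw [hdist0, (hdistP i).2]
      apply Real.sqrt_lt_sqrt (hdistP i).1
      nlinarith [hci i, hsi, ht]
end

section
/- Define COMP : {0,1}ⁿ × {0,1}ⁿ → {0,1} by COMP(X,Y) = 1 iff Σᵢ 2^{n-i} Xᵢ ≥ Σᵢ 2^{n-i} Yᵢ. Define 2n anchors in ℝ^{2n}: for i ∈ {1,…,n}, a_{2i-1} = (1/2)𝟙 + c_{2i-1}(eᵢ, -eᵢ) labeled positive and a_{2i} = (1/2)𝟙 - c_{2i}(eᵢ, -eᵢ) labeled negative, where c_j = 1/2 + (j-1)/(4n). Then for every (X,Y) ∈ {0,1}^{2n}, the unique closest anchor has positive label iff COMP(X,Y) = 1. Hence COMP has a 2n-anchor NN representation. -/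
/-!
For a binary point `Z = (X, Y)` and an anchor `½𝟙 + t (eᵢ, -eᵢ)` the squared distance is
`n/2 + 2 t (t - (Xᵢ - Yᵢ))`. So, with `D = X - Y ∈ {-1, 0, 1}ⁿ`, positive anchors have cost
`c (c - Dᵢ)` and negative ones `c (c + Dⱼ)`. A cost is negative exactly when the anchor's sign
agrees with a nonzero `Dᵢ`, and it is then `c (c - 1)`, increasing in `c ≥ 1/2`. As the coefficients
increase with the index, the closest anchor sits at the first bit where `X` and `Y` differ and has
the sign of that difference, which is also the sign of `X - Y` as binary numbers. If `X = Y`, all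
costs are `c²` and the first positive anchor wins.
-/

open Finset

section Binary

variable {ι : Type*} [Fintype ι] [DecidableEq ι]

theorem sum_sq_sub_half_add_single {w : ι → ℝ} (hw : ∀ k, w k = 0 ∨ w k = 1) (i : ι) (s : ℝ) :
    ∑ k, (w k - (1 / 2 + if k = i then s else 0)) ^ 2
      = Fintype.card ι / 4 + s * (s - 2 * w i + 1) := by
  have hterm : ∀ k, (w k - (1 / 2 + if k = i then s else 0)) ^ 2
      = 1 / 4 + if k = i then s * (s - 2 * w i + 1) else 0 := by
    intro k
    split_ifs with h
    · subst h; rcases hw k with h | h <;> rw [h] <;> ring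
    · rcases hw k with h | h <;> rw [h] <;> norm_num
  simp only [hterm, sum_add_distrib, sum_const, card_univ, sum_ite_eq', mem_univ, if_true,
    nsmul_eq_mul]
  ring

theorem dist_sq_eq_of_binary {X Y : ι → ℝ} (hX : ∀ k, X k = 0 ∨ X k = 1)
    (hY : ∀ k, Y k = 0 ∨ Y k = 1) {Z a : EuclideanSpace ℝ (ι ⊕ ι)} (hZ : Z.ofLp = Sum.elim X Y)
    {t : ℝ} {i : ι} (ha : ∀ j, a j = 1 / 2 + t *
        Sum.elim (fun k => if k = i then (1 : ℝ) else 0)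
          (fun k => if k = i then (-1 : ℝ) else 0) j) :
    dist Z a ^ 2 = Fintype.card ι / 2 + 2 * (t * (t - (X i - Y i))) := by
  rw [EuclideanSpace.dist_eq, Real.sq_sqrt (sum_nonneg fun _ _ => sq_nonneg _),
    Fintype.sum_sum_type]
  simp only [Real.dist_eq, sq_abs, hZ, ha, Sum.elim_inl, Sum.elim_inr, mul_ite, mul_one, mul_neg,
    mul_zero, sum_sq_sub_half_add_single hX, sum_sq_sub_half_add_single hY]
  ring

theorem dist_lt_dist_iff_of_binary {X Y : ι → ℝ} (hX : ∀ k, X k = 0 ∨ X k = 1)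
    (hY : ∀ k, Y k = 0 ∨ Y k = 1) {Z a b : EuclideanSpace ℝ (ι ⊕ ι)} (hZ : Z.ofLp = Sum.elim X Y)
    {t u : ℝ} {i j : ι}
    (ha : ∀ k, a k = 1 / 2 + t *
        Sum.elim (fun k => if k = i then (1 : ℝ) else 0)
          (fun k => if k = i then (-1 : ℝ) else 0) k)
    (hb : ∀ k, b k = 1 / 2 + u *
        Sum.elim (fun k => if k = j then (1 : ℝ) else 0)
          (fun k => if k = j then (-1 : ℝ) else 0) k) :
    dist Z a < dist Z b ↔ t * (t - (X i - Y i)) < u * (u - (X j - Y j)) := by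
  rw [← pow_lt_pow_iff_left₀ dist_nonneg dist_nonneg two_ne_zero, dist_sq_eq_of_binary hX hY hZ ha,
    dist_sq_eq_of_binary hX hY hZ hb]
  constructor <;> intro h <;> linarith

end Binary

theorem sum_filter_gt_two_pow_lt {n : ℕ} (i : Fin n) :
    ∑ k ∈ univ.filter (i < ·), (2 : ℝ) ^ (n - 1 - (k : ℕ)) < 2 ^ (n - 1 - (i : ℕ)) := by
  have hinj : Set.InjOn (fun k : Fin n => n - 1 - (k : ℕ)) (univ.filter (i < ·)) := by
    intro a _ b _ hab
    have := a.isLt; have := b.isLt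
    exact Fin.ext (by simp only at hab; omega)
  rw [← sum_image hinj]
  exact_mod_cast Nat.geomSum_lt le_rfl fun m hm => by
    simp only [mem_image, mem_filter, mem_univ, true_and] at hm
    obtain ⟨k, hik, rfl⟩ := hm
    have := k.isLt; have : (i : ℕ) < k := hik
    omega

theorem sum_two_pow_mul_pos_of_leading_one {n : ℕ} {D : Fin n → ℝ} (hD : ∀ k, |D k| ≤ 1)
    {i : Fin n} (hlt : ∀ k < i, D k = 0) (hi : D i = 1) :
    0 < ∑ k : Fin n, 2 ^ (n - 1 - (k : ℕ)) * D k := by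
  calc (0 : ℝ) < 2 ^ (n - 1 - (i : ℕ)) - ∑ k ∈ univ.filter (i < ·), (2 : ℝ) ^ (n - 1 - (k : ℕ)) :=
        sub_pos.2 (sum_filter_gt_two_pow_lt i)
    _ = ∑ k : Fin n, ((if k = i then 2 ^ (n - 1 - (k : ℕ)) else 0)
          - if i < k then 2 ^ (n - 1 - (k : ℕ)) else 0) := by
        rw [sum_sub_distrib, sum_ite_eq', sum_filter, if_pos (mem_univ i)]
    _ ≤ ∑ k : Fin n, 2 ^ (n - 1 - (k : ℕ)) * D k := by
        refine sum_le_sum fun k _ => ?_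
        rcases lt_trichotomy k i with h | rfl | h
        · simp [hlt k h, h.ne, h.not_gt]
        · simp [hi]
        · simp only [if_neg h.ne', if_pos h, zero_sub]
          have := (abs_le.1 (hD k)).1
          have : (0 : ℝ) < 2 ^ (n - 1 - (k : ℕ)) := by positivity
          nlinarith

theorem eq_zero_or_exists_leading {α M : Type*} [LinearOrder α] [WellFoundedLT α] [Zero M]
    (f : α → M) : (∀ k, f k = 0) ∨ ∃ i, (∀ k < i, f k = 0) ∧ f i ≠ 0 := by
  by_cases h : ∀ k, f k = 0
  · exact Or.inl h
  simp only [not_forall] at h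
  obtain ⟨i, hi, hmin⟩ := wellFounded_lt.has_min {k | f k ≠ 0} h
  exact Or.inr ⟨i, fun k hk => not_not.1 fun hne => hmin k hne hk, hi⟩

theorem mul_sub_lt_mul_add_of_leading_eq_one {n : ℕ} {c : ℕ → ℝ} (hc : StrictMono c)
    (hc_half : ∀ k, 1 / 2 ≤ c k) (hc_one : ∀ k < 2 * n, c k < 1) {D : Fin n → ℝ}
    (hD : ∀ k, |D k| ≤ 1) {i : Fin n} (hlt : ∀ k < i, D k = 0) (hi : D i = 1) (j : Fin n) :
    c (2 * i) * (c (2 * i) - D i) < c (2 * j + 1) * (c (2 * j + 1) + D j) := by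
  have hs := hc_half (2 * i)
  have hs1 := hc_one (2 * i) (by omega)
  have ht := hc_half (2 * j + 1)
  rw [hi]
  rcases lt_or_ge j i with hji | hij
  · rw [hlt j hji]
    nlinarith
  · have hst : c (2 * i) < c (2 * j + 1) := hc (by rw [Fin.le_def] at hij; omega)
    have := (abs_le.1 (hD j)).1
    nlinarith

theorem mul_add_lt_mul_sub_of_leading_eq_neg_one {n : ℕ} {c : ℕ → ℝ} (hc : StrictMono c)
    (hc_half : ∀ k, 1 / 2 ≤ c k) (hc_one : ∀ k < 2 * n, c k < 1) {D : Fin n → ℝ}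
    (hD : ∀ k, |D k| ≤ 1) {j : Fin n} (hlt : ∀ k < j, D k = 0) (hj : D j = -1) (i : Fin n) :
    c (2 * j + 1) * (c (2 * j + 1) + D j) < c (2 * i) * (c (2 * i) - D i) := by
  have hs := hc_half (2 * i)
  have ht := hc_half (2 * j + 1)
  have ht1 := hc_one (2 * j + 1) (by omega)
  rw [hj]
  rcases le_or_gt i j with hij | hji
  · have hDi : D i ≤ 0 := by
      rcases hij.lt_or_eq with h | rfl
      · exact (hlt i h).le
      · linarith
    nlinarith
  · have hts : c (2 * j + 1) < c (2 * i) := hc (by rw [Fin.lt_def] at hji; omega)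
    have := (abs_le.1 (hD i)).2
    nlinarith

theorem zero_le_sum_two_pow_mul_iff {n : ℕ} (hn : 0 < n) {c : ℕ → ℝ} (hc : StrictMono c)
    (hc_half : ∀ k, 1 / 2 ≤ c k) (hc_one : ∀ k < 2 * n, c k < 1) {D : Fin n → ℝ}
    (hD_mem : ∀ k, D k = -1 ∨ D k = 0 ∨ D k = 1) :
    0 ≤ ∑ k : Fin n, 2 ^ (n - 1 - (k : ℕ)) * D k ↔
      ∃ i : Fin n, ∀ j : Fin n,
        c (2 * i) * (c (2 * i) - D i) < c (2 * j + 1) * (c (2 * j + 1) + D j) := by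
  have hD : ∀ k, |D k| ≤ 1 := fun k => by
    rcases hD_mem k with h | h | h <;> norm_num [h]
  rcases eq_zero_or_exists_leading D with h0 | ⟨i, hlt, hi⟩
  · refine iff_of_true (by simp [h0]) ⟨⟨0, hn⟩, fun j => ?_⟩
    have := hc (show 0 < 2 * (j : ℕ) + 1 by omega)
    simp only [h0, sub_zero, add_zero]
    nlinarith [hc_half 0]
  rcases hD_mem i with h1 | h0 | h1
  · have hneg := sum_two_pow_mul_pos_of_leading_one (D := -D) (by simpa using hD)
      (by simpa using hlt) (by simp [h1])
    simp only [Pi.neg_apply, mul_neg, sum_neg_distrib, neg_pos] at hneg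
    refine iff_of_false hneg.not_ge fun ⟨i', hi'⟩ => (hi' i).not_gt ?_
    exact mul_add_lt_mul_sub_of_leading_eq_neg_one hc hc_half hc_one hD hlt h1 i'
  · exact absurd h0 hi
  · exact iff_of_true (sum_two_pow_mul_pos_of_leading_one hD hlt h1).le
      ⟨i, mul_sub_lt_mul_add_of_leading_eq_one hc hc_half hc_one hD hlt h1⟩

/-- `comparisonCoeff n (j - 1)` is the paper's `c_j`: positive anchors use `k = 2i`, negative ones
`k = 2i + 1` (0-indexed). -/
noncomputable def comparisonCoeff (n k : ℕ) : ℝ := 1 / 2 + k / (4 * n)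

theorem comparisonCoeff_strictMono {n : ℕ} (hn : 0 < n) : StrictMono (comparisonCoeff n) := by
  intro k l hkl
  unfold comparisonCoeff
  gcongr

theorem half_le_comparisonCoeff (n k : ℕ) : 1 / 2 ≤ comparisonCoeff n k := by
  unfold comparisonCoeff
  have : (0 : ℝ) ≤ k / (4 * n) := by positivity
  linarith

theorem comparisonCoeff_lt_one {n k : ℕ} (hk : k < 2 * n) : comparisonCoeff n k < 1 := by
  have hn : (0 : ℝ) < n := by exact_mod_cast (show 0 < n by omega)
  have hk' : (k : ℝ) < 2 * n := by exact_mod_cast hk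
  unfold comparisonCoeff
  have : (k : ℝ) / (4 * n) < 1 / 2 := by
    rw [div_lt_iff₀ (by positivity)]
    linarith
  linarith

/-- The `2n`-anchor NN representation of COMPARISON: a positive anchor is the
unique closest anchor iff `X ≥ Y` as `n`-bit integers. -/
theorem stmt_12 (n : ℕ) (hn : 0 < n)
    (aP aM : Fin n → EuclideanSpace ℝ (Fin n ⊕ Fin n))
    (haP : ∀ i j, aP i j =
      1 / 2 + (1 / 2 + (2 * (i : ℝ)) / (4 * n)) *
        Sum.elim (fun k => if k = i then (1 : ℝ) else 0)
          (fun k => if k = i then (-1 : ℝ) else 0) j)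
    (haM : ∀ i j, aM i j =
      1 / 2 - (1 / 2 + (2 * (i : ℝ) + 1) / (4 * n)) *
        Sum.elim (fun k => if k = i then (1 : ℝ) else 0)
          (fun k => if k = i then (-1 : ℝ) else 0) j) :
    ∀ X Y : Fin n → ℝ, (∀ i, X i = 0 ∨ X i = 1) → (∀ i, Y i = 0 ∨ Y i = 1) →
      ∀ Z : EuclideanSpace ℝ (Fin n ⊕ Fin n), Z = Sum.elim X Y →
        ((∑ i : Fin n, 2 ^ (n - 1 - (i : ℕ)) * Y i ≤ ∑ i : Fin n, 2 ^ (n - 1 - (i : ℕ)) * X i) ↔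
          ∃ i, ∀ j, dist Z (aP i) < dist Z (aM j)) := by
  intro X Y hX hY Z hZ
  set c := comparisonCoeff n
  have hc := comparisonCoeff_strictMono hn
  have hc_half := half_le_comparisonCoeff n
  have hc_one : ∀ k < 2 * n, c k < 1 := fun k => comparisonCoeff_lt_one
  set D : Fin n → ℝ := fun k => X k - Y k
  have hD_mem : ∀ k, D k = -1 ∨ D k = 0 ∨ D k = 1 := fun k => by
    rcases hX k with h | h <;> rcases hY k with h' | h' <;> norm_num [D, h, h']
  have hdist : ∀ i j, dist Z (aP i) < dist Z (aM j) ↔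
      c (2 * i) * (c (2 * i) - D i) < c (2 * j + 1) * (c (2 * j + 1) + D j) := fun i j => by
    rw [dist_lt_dist_iff_of_binary hX hY hZ (t := c (2 * i)) (u := -c (2 * j + 1)) (i := i)
      (j := j) (fun k => by rw [haP]; simp [c, comparisonCoeff])
      (fun k => by
        rw [haM]
        simp only [c, comparisonCoeff, Nat.cast_add, Nat.cast_mul, Nat.cast_ofNat, Nat.cast_one]
        ring),
      show ∀ u d : ℝ, -u * (-u - d) = u * (u + d) from fun _ _ => by ring]
  have hcomp : (∑ k : Fin n, 2 ^ (n - 1 - (k : ℕ)) * Y k ≤ ∑ k : Fin n, 2 ^ (n - 1 - (k : ℕ)) * X k)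
      ↔ 0 ≤ ∑ k : Fin n, 2 ^ (n - 1 - (k : ℕ)) * D k := by
    simp only [D, mul_sub, sum_sub_distrib, sub_nonneg]
  simp only [hdist, hcomp]
  exact zero_le_sum_two_pow_mul_iff hn hc hc_half hc_one hD_mem
end

section
/- Suppose X, Y ∈ {0,1}ⁿ satisfy Xⱼ = Yⱼ for all j < k, X_k = 1, Y_k = 0 (so X > Y as n-bit integers with bit 1 most significant). Then in the COMP anchor construction with c_j = 1/2 + (j-1)/(4n), the anchor a_{2k-1} is strictly closer to (X,Y) than every other anchor a_m, m ≠ 2k-1. -/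
lemma sum_bit_aux {n : ℕ} (X : Fin n → ℝ) (hb : ∀ i, (X i - 1/2)^2 = 1/4)
    (m : Fin n) (v : ℝ) :
    ∑ i : Fin n, (X i - (1/2 + (if i = m then v else 0)))^2
      = ((n:ℝ) - 1)/4 + (X m - (1/2 + v))^2 := by
  rw [← Finset.sum_erase_add _ _ (Finset.mem_univ m), if_pos rfl]
  congr 1
  have : ∀ i ∈ Finset.univ.erase m,
      (X i - (1/2 + (if i = m then v else 0)))^2 = 1/4 := by
    intro i hi
    rw [if_neg (Finset.ne_of_mem_erase hi), add_zero, hb i]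
  rw [Finset.sum_congr rfl this, Finset.sum_const, Finset.card_erase_of_mem (Finset.mem_univ m),
    Finset.card_univ, Fintype.card_fin, nsmul_eq_mul, Nat.cast_sub m.pos]
  push_cast
  ring

lemma comp_ineq (cK c x y : ℝ) (hK0 : 1/2 ≤ cK) (hK1 : cK < 1) (hc : 1/2 ≤ c)
    (hcase : (x = y ∧ (x = 0 ∨ x = 1)) ∨ (x = 1 ∧ y = 0 ∧ cK < c) ∨ (x = 0 ∧ y = 1 ∧ cK < c)) :
    (1 - (1/2 + cK))^2 + (0 - (1/2 + -cK))^2 < (x - (1/2 + c))^2 + (y - (1/2 + -c))^2 := by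
  have hsmall : 2 * (cK - 1/2)^2 < 1/2 := by
    nlinarith [mul_nonneg (by linarith : (0:ℝ) ≤ 1 - cK) (by linarith : (0:ℝ) ≤ cK - 1/2)]
  rcases hcase with ⟨hxy, hx | hx⟩ | ⟨hx, hy, hkc⟩ | ⟨hx, hy, hkc⟩
  · rw [← hxy, hx]; nlinarith
  · rw [← hxy, hx]; nlinarith
  · rw [hx, hy]
    nlinarith [mul_pos (by linarith : (0:ℝ) < c - cK) (by linarith : (0:ℝ) < c + cK - 1)]
  · rw [hx, hy]; nlinarith

/-- Domination principle for COMP: if the most significant differing bit is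
`k` with `X_k = 1 > Y_k = 0`, then `a_{2k-1}` is strictly closest. -/
theorem stmt_14 (n : ℕ) (hn : 0 < n)
    (aP aM : Fin n → EuclideanSpace ℝ (Fin n ⊕ Fin n))
    (haP : ∀ i j, aP i j =
      1 / 2 + (1 / 2 + (2 * (i : ℝ)) / (4 * n)) *
        Sum.elim (fun k => if k = i then (1 : ℝ) else 0)
          (fun k => if k = i then (-1 : ℝ) else 0) j)
    (haM : ∀ i j, aM i j =
      1 / 2 - (1 / 2 + (2 * (i : ℝ) + 1) / (4 * n)) *
        Sum.elim (fun k => if k = i then (1 : ℝ) else 0)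
          (fun k => if k = i then (-1 : ℝ) else 0) j)
    (X Y : Fin n → ℝ) (hX : ∀ i, X i = 0 ∨ X i = 1) (hY : ∀ i, Y i = 0 ∨ Y i = 1)
    (k : Fin n) (hlt : ∀ j, j < k → X j = Y j) (hXk : X k = 1) (hYk : Y k = 0)
    (Z : EuclideanSpace ℝ (Fin n ⊕ Fin n)) (hZ : Z = Sum.elim X Y) :
    (∀ i, i ≠ k → dist Z (aP k) < dist Z (aP i)) ∧
    (∀ i, dist Z (aP k) < dist Z (aM i)) := by
  have hn' : (0:ℝ) < (n:ℝ) := by exact_mod_cast hn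
  have hn1 : (1:ℝ) ≤ (n:ℝ) := by exact_mod_cast hn
  -- bit facts
  have hbX : ∀ i, (X i - 1/2)^2 = 1/4 := by
    intro i; rcases hX i with h | h <;> rw [h] <;> norm_num
  have hbY : ∀ i, (Y i - 1/2)^2 = 1/4 := by
    intro i; rcases hY i with h | h <;> rw [h] <;> norm_num
  -- anchor coefficients
  set cP : Fin n → ℝ := fun m => 1/2 + 2*(m:ℝ)/(4*n) with hcP
  set cM : Fin n → ℝ := fun m => 1/2 + (2*(m:ℝ)+1)/(4*n) with hcM
  have hcP_half : ∀ m, 1/2 ≤ cP m := by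
    intro m; simp only [hcP]
    have : (0:ℝ) ≤ 2*(m:ℝ)/(4*n) := by positivity
    linarith
  have hcM_half : ∀ m, 1/2 ≤ cM m := by
    intro m; simp only [hcM]
    have : (0:ℝ) ≤ (2*(m:ℝ)+1)/(4*n) := by positivity
    linarith
  have hmlt : ∀ m : Fin n, (m:ℝ) < n := by
    intro m; exact_mod_cast m.isLt
  have hcP_one : ∀ m, cP m < 1 := by
    intro m; simp only [hcP]
    have h1 : 2*(m:ℝ)/(4*n) < 1/2 := by
      rw [div_lt_iff₀ (by positivity)]
      have := hmlt m; linarith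
    linarith
  -- distance formulas
  have dist_formula : ∀ (a : EuclideanSpace ℝ (Fin n ⊕ Fin n)),
      dist Z a = Real.sqrt (∑ j, (Z j - a j)^2) := by
    intro a
    rw [EuclideanSpace.dist_eq]
    congr 1
    exact Finset.sum_congr rfl fun j _ => by rw [Real.dist_eq, sq_abs]
  have dsqP : ∀ m : Fin n, dist Z (aP m) =
      Real.sqrt ((((n:ℝ)-1)/4 + (X m - (1/2 + cP m))^2)
        + (((n:ℝ)-1)/4 + (Y m - (1/2 + (-(cP m))))^2)) := by
    intro m
    rw [dist_formula]
    congr 1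
    rw [Fintype.sum_sum_type, ← sum_bit_aux X hbX m (cP m), ← sum_bit_aux Y hbY m (-(cP m))]
    congr 1
    · refine Finset.sum_congr rfl fun i _ => ?_
      rw [hZ, haP]; simp only [Sum.elim_inl, hcP]
      by_cases h : i = m <;> simp [h]
    · refine Finset.sum_congr rfl fun i _ => ?_
      rw [hZ, haP]; simp only [Sum.elim_inr, hcP]
      by_cases h : i = m <;> simp [h] <;> ring_nf
  have dsqM : ∀ m : Fin n, dist Z (aM m) =
      Real.sqrt ((((n:ℝ)-1)/4 + (X m - (1/2 + (-(cM m))))^2)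
        + (((n:ℝ)-1)/4 + (Y m - (1/2 + cM m))^2)) := by
    intro m
    rw [dist_formula]
    congr 1
    rw [Fintype.sum_sum_type, ← sum_bit_aux X hbX m (-(cM m)), ← sum_bit_aux Y hbY m (cM m)]
    congr 1
    · refine Finset.sum_congr rfl fun i _ => ?_
      rw [hZ, haM]; simp only [Sum.elim_inl, hcM]
      by_cases h : i = m <;> simp [h] <;> ring_nf
    · refine Finset.sum_congr rfl fun i _ => ?_
      rw [hZ, haM]; simp only [Sum.elim_inr, hcM]
      by_cases h : i = m <;> simp [h] <;> ring_nf
  -- the left-hand side sum is nonneg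
  have hK0 : 1/2 ≤ cP k := hcP_half k
  have hK1 : cP k < 1 := hcP_one k
  have hLnn : 0 ≤ (((n:ℝ)-1)/4 + (X k - (1/2 + cP k))^2)
        + (((n:ℝ)-1)/4 + (Y k - (1/2 + (-(cP k))))^2) := by
    nlinarith [sq_nonneg (X k - (1/2 + cP k)), sq_nonneg (Y k - (1/2 + (-(cP k))))]
  have hK0' : 1/2 ≤ cP k := hcP_half k
  constructor
  · intro i hik
    rw [dsqP k, dsqP i]
    apply Real.sqrt_lt_sqrt hLnn
    rw [hXk, hYk]
    have hcase : (X i = Y i ∧ (X i = 0 ∨ X i = 1)) ∨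
        (X i = 1 ∧ Y i = 0 ∧ cP k < cP i) ∨ (X i = 0 ∧ Y i = 1 ∧ cP k < cP i) := by
      rcases lt_or_gt_of_ne hik with hik' | hik'
      · exact Or.inl ⟨hlt i hik', hX i⟩
      · have hki' : ((k:ℕ):ℝ) < ((i:ℕ):ℝ) := by exact_mod_cast hik'
        have h4 : (0:ℝ) < 4*(n:ℝ) := by positivity
        have hkc : cP k < cP i := by
          simp only [hcP]
          have : 2*((k:ℕ):ℝ)/(4*(n:ℝ)) < 2*((i:ℕ):ℝ)/(4*(n:ℝ)) := by
            rw [div_lt_div_iff₀ h4 h4]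
            nlinarith
          linarith
        rcases hX i with h | h <;> rcases hY i with h' | h'
        · exact Or.inl ⟨h.trans h'.symm, Or.inl h⟩
        · exact Or.inr (Or.inr ⟨h, h', hkc⟩)
        · exact Or.inr (Or.inl ⟨h, h', hkc⟩)
        · exact Or.inl ⟨h.trans h'.symm, Or.inr h⟩
    have key := comp_ineq (cP k) (cP i) (X i) (Y i) hK0 hK1 (hcP_half i) hcase
    linarith
  · intro i
    rw [dsqP k, dsqM i]
    apply Real.sqrt_lt_sqrt hLnn
    rw [hXk, hYk]
    have hcase : (Y i = X i ∧ (Y i = 0 ∨ Y i = 1)) ∨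
        (Y i = 1 ∧ X i = 0 ∧ cP k < cM i) ∨ (Y i = 0 ∧ X i = 1 ∧ cP k < cM i) := by
      rcases lt_or_ge i k with hik' | hik'
      · exact Or.inl ⟨(hlt i hik').symm, hY i⟩
      · have hki' : ((k:ℕ):ℝ) ≤ ((i:ℕ):ℝ) := by exact_mod_cast hik'
        have h4 : (0:ℝ) < 4*(n:ℝ) := by positivity
        have hkc : cP k < cM i := by
          simp only [hcP, hcM]
          have : 2*((k:ℕ):ℝ)/(4*(n:ℝ)) < (2*((i:ℕ):ℝ)+1)/(4*(n:ℝ)) := by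
            rw [div_lt_div_iff₀ h4 h4]
            nlinarith
          linarith
        rcases hX i with h | h <;> rcases hY i with h' | h'
        · exact Or.inl ⟨h'.trans h.symm, Or.inl h'⟩
        · exact Or.inr (Or.inl ⟨h', h, hkc⟩)
        · exact Or.inr (Or.inr ⟨h', h, hkc⟩)
        · exact Or.inl ⟨h'.trans h.symm, Or.inr h'⟩
    have key := comp_ineq (cP k) (cM i) (Y i) (X i) hK0 hK1 (hcM_half i) hcase
    linarith
end

section
/- Define OMB : {0,1}ⁿ → {0,1} by OMB(X) = 1 iff the smallest index i with Xᵢ = 1 is odd (and OMB(0) = 0). Define n+1 anchors in ℝⁿ: for i ∈ {1,…,n}, aᵢ = (1 - (i-1)/n)·eᵢ, labeled positive iff i is odd; and a_{n+1} = 0 labeled negative. Then for every X ∈ {0,1}ⁿ with smallest 1-index k, the anchor a_k is strictly closer to X than all other anchors, and for X = 0 the anchor a_{n+1} is strictly closest. Hence this is an (n+1)-anchor NN representation of OMB. -/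
/-- The `(n+1)`-anchor NN representation of ODD-MAX-BIT: for a binary vector
with first `1` at position `k`, the anchor `a_k` is strictly closest; for the
all-zero vector the zero anchor is strictly closest. -/
theorem stmt_16 (n : ℕ) (hn : 0 < n)
    (a : Fin n → EuclideanSpace ℝ (Fin n))
    (ha : ∀ i j, a i j = if j = i then 1 - (i : ℝ) / n else 0)
    (aLast : EuclideanSpace ℝ (Fin n)) (haLast : ∀ j, aLast j = 0) :
    ∀ X : EuclideanSpace ℝ (Fin n), (∀ i, X i = 0 ∨ X i = 1) →
      ((∀ k : Fin n, X k = 1 → (∀ j, j < k → X j = 0) →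
          (∀ i, i ≠ k → dist X (a k) < dist X (a i)) ∧
          dist X (a k) < dist X aLast) ∧
       ((∀ i, X i = 0) → ∀ i, dist X aLast < dist X (a i))) := by
  intro X hX
  have hnR : (0 : ℝ) < n := by exact_mod_cast hn
  -- distance-squared sums
  have hdist : ∀ y : EuclideanSpace ℝ (Fin n),
      dist X y = Real.sqrt (∑ j, (X j - y j) ^ 2) := by
    intro y
    simp [EuclideanSpace.dist_eq, Real.dist_eq, sq_abs]
  set S : ℝ := ∑ j, (X j) ^ 2 with hS
  have key : ∀ i : Fin n,
      (∑ j, (X j - a i j) ^ 2) = S + (-(X i) ^ 2 + (X i - (1 - (i : ℝ) / n)) ^ 2) := by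
    intro i
    have : ∀ j : Fin n, (X j - a i j) ^ 2
        = (X j) ^ 2 + (if j = i then (-(X i) ^ 2 + (X i - (1 - (i : ℝ) / n)) ^ 2) else 0) := by
      intro j
      rw [ha]
      rcases eq_or_ne j i with h | h
      · subst h; simp
      · simp [h]
    rw [Finset.sum_congr rfl fun j _ => this j, Finset.sum_add_distrib,
      Finset.sum_ite_eq' Finset.univ i]
    simp [hS]
  have keyLast : (∑ j, (X j - aLast j) ^ 2) = S := by
    simp [haLast, hS]
  have hfrac : ∀ i : Fin n, 0 ≤ (i : ℝ) / n ∧ (i : ℝ) / n < 1 := by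
    intro i
    constructor
    · positivity
    · rw [div_lt_one hnR]; exact_mod_cast i.2
  have hcmp : ∀ y z : EuclideanSpace ℝ (Fin n),
      (∑ j, (X j - y j) ^ 2) < (∑ j, (X j - z j) ^ 2) → dist X y < dist X z := by
    intro y z h
    rw [hdist, hdist]
    exact Real.sqrt_lt_sqrt (Finset.sum_nonneg fun j _ => sq_nonneg _) h
  constructor
  · intro k hk hlead
    have hk2 := key k
    rw [hk] at hk2
    have hkfrac := hfrac k
    constructor
    · intro i hik
      apply hcmp
      rw [hk2, key]
      rcases hX i with h0 | h1
      · rw [h0]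
        have := (hfrac i).1
        nlinarith [sq_nonneg (1 - (i : ℝ) / n), hkfrac.1, hkfrac.2]
      · rw [h1]
        have hki : k < i := by
          by_contra h
          rcases lt_or_eq_of_le (not_lt.mp h) with h' | h'
          · exact absurd (hlead i h') (by rw [h1]; norm_num)
          · exact hik h'
        have hdd : (k : ℝ) / n < (i : ℝ) / n := by
          gcongr
          exact_mod_cast hki
        nlinarith [hkfrac.1, (hfrac i).1]
    · apply hcmp
      rw [hk2, keyLast]
      nlinarith [hkfrac.1, hkfrac.2]
  · intro h0 i
    apply hcmp
    rw [key, keyLast]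
    have hXi := h0 i
    rw [hXi]
    have := hfrac i
    nlinarith [this.1, this.2]
end
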